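/- Let α ∈ ℂ, let (c_k)_{k≥0} be a sequence of complex numbers, and let d_m = Σ_{k=0}^m C(m,k) (−1)^{m−k} c_k. Then for every natural number n ≥ 1: Σ_{k=0}^n C(n,k) (−1)^k H_k(α) c_k = (−1)^n d_n H_n(α) − Σ_{m=0}^{n−1} (−1)^m d_m / (n − m) + Σ_{m=0}^{n−1} (−1)^m d_m · ( Σ_{t=n−m}^{n} C(t, n−m) (1 − α)^{n−m} α^{t−(n−m)} / t ). -/

import Mathlib

open Finset

/-- The generalized harmonic number `H_n(α) = ∑_{k=1}^n α^k / k`. -/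
noncomputable def genHarmonic (α : ℂ) (n : ℕ) : ℂ :=
  ∑ k ∈ Finset.Icc 1 n, α ^ k / (k : ℂ)

lemma genHarmonic_succ (α : ℂ) (n : ℕ) :
    genHarmonic α (n + 1) = genHarmonic α n + α ^ (n + 1) / ((n : ℂ) + 1) := by
  unfold genHarmonic
  rw [Finset.sum_Icc_succ_top (by omega)]
  push_cast
  ring

lemma diff_step (f : ℕ → ℂ) (N m : ℕ) :
    ∑ j ∈ range (N + 2), ((N + 1).choose j : ℂ) * (-1) ^ j * f (m + j)
      = ∑ j ∈ range (N + 1), (N.choose j : ℂ) * (-1) ^ j * f (m + j)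
        - ∑ j ∈ range (N + 1), (N.choose j : ℂ) * (-1) ^ j * f (m + 1 + j) := by
  have h1 : ∑ j ∈ range (N + 2), ((N + 1).choose j : ℂ) * (-1) ^ j * f (m + j)
      = ((N+1).choose 0 : ℂ) * (-1) ^ 0 * f (m + 0)
        + ∑ j ∈ range (N + 1), ((N + 1).choose (j+1) : ℂ) * (-1) ^ (j+1) * f (m + (j+1)) := by
    rw [Finset.sum_range_succ' (fun j => ((N + 1).choose j : ℂ) * (-1) ^ j * f (m + j)) (N+1)]
    ring
  have h2 : ∑ j ∈ range (N + 2), (N.choose j : ℂ) * (-1) ^ j * f (m + j)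
      = (N.choose 0 : ℂ) * (-1) ^ 0 * f (m + 0)
        + ∑ j ∈ range (N + 1), (N.choose (j+1) : ℂ) * (-1) ^ (j+1) * f (m + (j+1)) := by
    rw [Finset.sum_range_succ' (fun j => (N.choose j : ℂ) * (-1) ^ j * f (m + j)) (N+1)]
    ring
  have h3 : ∑ j ∈ range (N + 2), (N.choose j : ℂ) * (-1) ^ j * f (m + j)
      = ∑ j ∈ range (N + 1), (N.choose j : ℂ) * (-1) ^ j * f (m + j) := by
    rw [Finset.sum_range_succ]
    simp [Nat.choose_succ_self]
  rw [h1]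
  have : ∀ j ∈ range (N+1), ((N + 1).choose (j+1) : ℂ) * (-1) ^ (j+1) * f (m + (j+1))
      = (N.choose (j+1) : ℂ) * (-1) ^ (j+1) * f (m + (j+1))
        - (N.choose j : ℂ) * (-1) ^ j * f (m + 1 + j) := by
    intro j _
    rw [Nat.choose_succ_succ]
    have : m + 1 + j = m + (j+1) := by omega
    rw [this]
    push_cast
    ring
  rw [Finset.sum_congr rfl this, Finset.sum_sub_distrib]
  have h4 := h2.symm
  rw [h3] at h4
  -- h4 : N.choose0 * ... + ∑ range(N+1) (succ terms) = ∑ range (N+1) plain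
  simp only [Nat.choose_zero_right, Nat.cast_one, pow_zero, Nat.add_zero, one_mul, mul_one] at h4 ⊢
  linear_combination h4

noncomputable def negPow (α : ℂ) (x : ℕ) : ℂ := -(α ^ (x + 1) / ((x : ℂ) + 1))

lemma lemG (α : ℂ) (N : ℕ) : ∀ m : ℕ,
    ∑ j ∈ range (N + 2), ((N + 1).choose j : ℂ) * (-1) ^ j * genHarmonic α (m + j)
      = ∑ i ∈ range (N + 1), (N.choose i : ℂ) * (-1) ^ i * negPow α (m + i) := by
  induction N with
  | zero =>
    intro m
    simp [Finset.sum_range_succ, genHarmonic_succ, negPow]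
  | succ N ih =>
    intro m
    rw [diff_step (genHarmonic α) (N + 1) m, ih m, ih (m + 1),
      ← diff_step (negPow α) N m]

lemma natD (N m a : ℕ) :
    (m + 1) * N.choose (a + 1) + (m + N + 2) * N.choose a
      = (m + a + 2) * (N + 1).choose (a + 1) := by
  rcases le_or_gt a N with h | h
  · have key := Nat.choose_succ_right_eq N a
    rw [Nat.choose_succ_succ]
    zify [h] at key ⊢
    linear_combination -key
  · rw [Nat.choose_eq_zero_of_lt h, Nat.choose_eq_zero_of_lt (by omega : N < a + 1),
      Nat.choose_eq_zero_of_lt (by omega : N + 1 < a + 1)]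
    ring

lemma natC (N m : ℕ) :
    (m + N + 2) * (m + N + 1).choose (N + 1) = (m + 1) * (m + N + 2).choose (N + 1) := by
  have h1 := Nat.add_one_mul_choose_eq (m + N + 1) m
  have h2 : (m + N + 1).choose m = (m + N + 1).choose (N + 1) := by
    rw [← Nat.choose_symm (by omega : N + 1 ≤ m + N + 1)]
    congr 1
    omega
  have h3 : (m + N + 2).choose (m + 1) = (m + N + 2).choose (N + 1) := by
    rw [← Nat.choose_symm (by omega : N + 1 ≤ m + N + 2)]
    congr 1
    omega
  rw [h2, h3] at h1
  simpa [Nat.succ_eq_add_one, Nat.mul_comm, Nat.add_assoc] using h1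

lemma cast_ne' (k : ℕ) : ((k : ℂ) + 1) ≠ 0 := by
  have : ((k + 1 : ℕ) : ℂ) ≠ 0 := Nat.cast_ne_zero.mpr (by omega)
  push_cast at this
  exact this

lemma lemD (α : ℂ) (N m : ℕ) :
    ((m + N + 1).choose (N + 1) : ℂ) *
        ∑ i ∈ range (N + 1), (N.choose i : ℂ) * (-1) ^ i * α ^ (m + i + 1) / ((m : ℂ) + i + 1)
      - ((m + N + 2).choose (N + 1) : ℂ) *
        ∑ i ∈ range (N + 1), (N.choose i : ℂ) * (-1) ^ i * α ^ (m + i + 2) / ((m : ℂ) + i + 2)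
      = ((m + N + 2).choose (N + 1) : ℂ) * (1 - α) ^ (N + 1) * α ^ (m + 1) / ((m : ℂ) + N + 2) := by
  have hCc : ((m : ℂ) + N + 2) * ((m + N + 1).choose (N + 1) : ℂ)
      = ((m : ℂ) + 1) * ((m + N + 2).choose (N + 1) : ℂ) := by
    have h := congrArg (fun x : ℕ => (x : ℂ)) (natC N m)
    push_cast at h
    linear_combination h
  have hmN : ((m : ℂ) + N + 2) ≠ 0 := by
    have h := cast_ne' (m + N + 1); push_cast at h
    intro hh; exact h (by linear_combination hh)
  set C1 : ℂ := ((m + N + 1).choose (N + 1) : ℂ) with hC1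
  set C2 : ℂ := ((m + N + 2).choose (N + 1) : ℂ) with hC2
  set g : ℕ → ℂ :=
    fun a => C1 * (N.choose a : ℂ) * (-1) ^ a * α ^ (m + a + 1) / ((m : ℂ) + a + 1) with hgdef
  set h : ℕ → ℂ := fun a =>
    if a = 0 then 0
    else C2 * (N.choose (a - 1) : ℂ) * (-1) ^ a * α ^ (m + a + 1) / ((m : ℂ) + a + 1) with hhdef
  have hg : C1 * ∑ i ∈ range (N + 1), (N.choose i : ℂ) * (-1) ^ i * α ^ (m + i + 1) / ((m : ℂ) + i + 1)
      = ∑ a ∈ range (N + 2), g a := by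
    have hgz : g (N + 1) = 0 := by simp [hgdef, Nat.choose_succ_self]
    rw [Finset.sum_range_succ g (N + 1), hgz, add_zero, Finset.mul_sum]
    refine Finset.sum_congr rfl fun i _ => ?_
    simp only [hgdef]
    ring
  have hh : C2 * ∑ i ∈ range (N + 1), (N.choose i : ℂ) * (-1) ^ i * α ^ (m + i + 2) / ((m : ℂ) + i + 2)
      = -∑ a ∈ range (N + 2), h a := by
    rw [Finset.sum_range_succ' h (N + 1)]
    have h0 : h 0 = 0 := by simp [hhdef]
    rw [h0, add_zero, Finset.mul_sum, ← Finset.sum_neg_distrib]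
    refine Finset.sum_congr rfl fun i _ => ?_
    simp only [hhdef, Nat.succ_ne_zero, if_false, Nat.add_sub_cancel]
    push_cast
    ring
  have hr : C2 * (1 - α) ^ (N + 1) * α ^ (m + 1) / ((m : ℂ) + N + 2)
      = ∑ a ∈ range (N + 2),
          C2 * ((-α) ^ a * ((N + 1).choose a : ℂ)) * α ^ (m + 1) / ((m : ℂ) + N + 2) := by
    have hb : (1 - α) ^ (N + 1)
        = ∑ a ∈ range (N + 2), (-α) ^ a * (1 : ℂ) ^ (N + 1 - a) * ((N + 1).choose a : ℂ) := by
      rw [← add_pow]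
      ring_nf
    rw [hb, Finset.mul_sum, Finset.sum_mul, Finset.sum_div]
    exact Finset.sum_congr rfl fun a _ => by ring
  rw [hg, hh, hr, sub_neg_eq_add, ← Finset.sum_add_distrib]
  refine Finset.sum_congr rfl fun a ha => ?_
  rw [Finset.mem_range] at ha
  match a with
  | 0 =>
    simp only [hgdef, hhdef, if_pos rfl, add_zero, pow_zero, Nat.choose_zero_right,
      Nat.cast_one, Nat.cast_zero]
    rw [div_eq_div_iff (by simpa using cast_ne' m) hmN]
    push_cast
    linear_combination α ^ (m + 1) * hCc
  | a + 1 =>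
    have hne1 : ((m : ℂ) + (a + 1 : ℕ) + 1) ≠ 0 := by
      have hq := cast_ne' (m + a + 1); push_cast at hq ⊢
      intro hhx; exact hq (by linear_combination hhx)
    simp only [hgdef, hhdef, Nat.succ_ne_zero, if_false, Nat.add_sub_cancel]
    rw [← add_div, div_eq_div_iff hne1 hmN]
    have hDc : ((m : ℂ) + 1) * (N.choose (a + 1) : ℂ) + ((m : ℂ) + N + 2) * (N.choose a : ℂ)
        = ((m : ℂ) + a + 2) * ((N + 1).choose (a + 1) : ℂ) := by
      have hq := congrArg (fun x : ℕ => (x : ℂ)) (natD N m a)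
      push_cast at hq
      linear_combination hq
    push_cast
    linear_combination ((-1 : ℂ) ^ (a + 1) * α ^ (m + a + 2)) * (N.choose (a + 1) : ℂ) * hCc
      + ((-1 : ℂ) ^ (a + 1) * α ^ (m + a + 2)) * C2 * hDc

lemma lemK (α : ℂ) (N : ℕ) : ∀ m : ℕ,
    ((m + N + 1).choose (N + 1) : ℂ) *
        ∑ i ∈ range (N + 1), (N.choose i : ℂ) * (-1) ^ i * negPow α (m + i)
      = ∑ s ∈ range (m + 1),
          ((N + 1 + s).choose (N + 1) : ℂ) * (1 - α) ^ (N + 1) * α ^ s / ((N + 1 + s : ℕ) : ℂ)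
        - 1 / ((N : ℂ) + 1) := by
  have hq : ∀ m' : ℕ,
      ∑ i ∈ range (N + 1), (N.choose i : ℂ) * (-1) ^ i * negPow α (m' + i)
        = -∑ i ∈ range (N + 1), (N.choose i : ℂ) * (-1) ^ i * α ^ (m' + i + 1) / ((m' : ℂ) + i + 1) := by
    intro m'
    rw [← Finset.sum_neg_distrib]
    refine Finset.sum_congr rfl fun i _ => ?_
    simp only [negPow]
    push_cast
    ring
  intro m
  induction m with
  | zero =>
    rw [hq 0]
    simp only [Nat.cast_zero]
    have hNe : ((N : ℂ) + 1) ≠ 0 := cast_ne' N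
    have hb : (1 - α) ^ (N + 1)
        = ∑ j ∈ range (N + 2), (-α) ^ j * ((N + 1).choose j : ℂ) := by
      have := add_pow (-α) 1 (N + 1)
      simp only [one_pow, mul_one] at this
      rw [show (1 : ℂ) - α = -α + 1 by ring, this]
    have hsum : ∑ i ∈ range (N + 1), (N.choose i : ℂ) * (-1) ^ i * α ^ (0 + i + 1) / ((0 : ℂ) + i + 1)
        = ((1 - α) ^ (N + 1) - 1) / -((N : ℂ) + 1) := by
      have hterm : ∀ i ∈ range (N + 1),
          (N.choose i : ℂ) * (-1) ^ i * α ^ (0 + i + 1) / ((0 : ℂ) + i + 1)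
            = ((N + 1).choose (i + 1) : ℂ) * (-α) ^ (i + 1) / -((N : ℂ) + 1) := by
        intro i _
        have hsc := congrArg (fun x : ℕ => (x : ℂ)) (Nat.add_one_mul_choose_eq N i)
        push_cast at hsc
        rw [div_eq_div_iff (by simpa using cast_ne' i) (by simpa using neg_ne_zero.mpr hNe)]
        linear_combination ((-1 : ℂ) ^ (i + 1) * α ^ (i + 1)) * hsc
      rw [Finset.sum_congr rfl hterm]
      rw [hb, Finset.sum_range_succ' (fun j => (-α) ^ j * ((N + 1).choose j : ℂ)) (N + 1)]
      simp only [pow_zero, Nat.choose_zero_right, Nat.cast_one, one_mul]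
      rw [add_sub_cancel_right, Finset.sum_div]
      exact Finset.sum_congr rfl fun i _ => by ring
    rw [hsum]
    simp only [Finset.sum_range_one, Nat.add_zero, Nat.zero_add, Nat.choose_self, Nat.cast_one,
      pow_zero]
    have hNe2 : ((N + 1 : ℕ) : ℂ) ≠ 0 := Nat.cast_ne_zero.mpr (by omega)
    push_cast at hNe2 ⊢
    rw [div_neg, neg_neg, sub_div]
    ring
  | succ m ih =>
    have e1 : m + 1 + N + 1 = m + N + 2 := by omega
    have e2 : N + 1 + (m + 1) = m + N + 2 := by omega
    rw [hq] at ih ⊢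
    rw [Finset.sum_range_succ
      (fun s => ((N + 1 + s).choose (N + 1) : ℂ) * (1 - α) ^ (N + 1) * α ^ s / ((N + 1 + s : ℕ) : ℂ))
      (m + 1), e1]
    have hD := lemD α N m
    have hqshift : ∑ i ∈ range (N + 1), (N.choose i : ℂ) * (-1) ^ i * α ^ (m + 1 + i + 1) / ((m : ℂ) + 1 + i + 1)
        = ∑ i ∈ range (N + 1), (N.choose i : ℂ) * (-1) ^ i * α ^ (m + i + 2) / ((m : ℂ) + i + 2) := by
      refine Finset.sum_congr rfl fun i _ => ?_
      have : m + 1 + i + 1 = m + i + 2 := by omega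
      rw [this]
      ring_nf
    have hcast : ((m + 1 : ℕ) : ℂ) = (m : ℂ) + 1 := by push_cast; ring
    rw [hcast, hqshift, e2]
    have hden : ((m + N + 2 : ℕ) : ℂ) = (m : ℂ) + N + 2 := by push_cast; ring
    rw [hden]
    linear_combination ih + hD

lemma altsum (K : ℕ) :
    ∑ r ∈ range (K + 1), (K.choose r : ℂ) * (-1) ^ r = if K = 0 then 1 else 0 := by
  have h := Int.alternating_sum_range_choose (n := K)
  have h2 := congrArg (fun x : ℤ => (x : ℂ)) h
  push_cast at h2
  rw [← h2]
  exact Finset.sum_congr rfl fun r _ => by ring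

lemma inversion (c d : ℕ → ℂ)
    (hd : ∀ m, d m =
      ∑ k ∈ Finset.range (m + 1), (Nat.choose m k : ℂ) * (-1) ^ (m - k) * c k)
    (k : ℕ) : c k = ∑ m ∈ range (k + 1), (k.choose m : ℂ) * d m := by
  have step1 : ∑ m ∈ range (k + 1), (k.choose m : ℂ) * d m
      = ∑ m ∈ Ico 0 (k + 1), ∑ j ∈ Ico 0 (m + 1),
          (k.choose m : ℂ) * ((m.choose j : ℂ) * (-1) ^ (m - j) * c j) := by
    simp only [Nat.Ico_zero_eq_range]
    refine Finset.sum_congr rfl fun m _ => ?_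
    rw [hd m, Finset.mul_sum]
  rw [step1, ← Finset.sum_Ico_Ico_comm 0 (k + 1)
    (fun j m => (k.choose m : ℂ) * ((m.choose j : ℂ) * (-1) ^ (m - j) * c j))]
  rw [Nat.Ico_zero_eq_range]
  have inner : ∀ j ∈ range (k + 1),
      ∑ m ∈ Ico j (k + 1), (k.choose m : ℂ) * ((m.choose j : ℂ) * (-1) ^ (m - j) * c j)
        = (if k - j = 0 then 1 else 0) * (k.choose j : ℂ) * c j := by
    intro j hj
    rw [Finset.mem_range] at hj
    have hjk : j ≤ k := by omega
    rw [Finset.sum_Ico_eq_sum_range]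
    have hcard : k + 1 - j = (k - j) + 1 := by omega
    rw [hcard]
    have hterm : ∀ r ∈ range ((k - j) + 1),
        (k.choose (j + r) : ℂ) * (((j + r).choose j : ℂ) * (-1) ^ (j + r - j) * c j)
          = ((k - j).choose r : ℂ) * (-1) ^ r * ((k.choose j : ℂ) * c j) := by
      intro r hr
      rw [Finset.mem_range] at hr
      have h1 : j + r - j = r := by omega
      have h2 := Nat.choose_mul (n := k) (show j ≤ j + r by omega)
      have h3 : j + r - j = r := h1
      rw [h3] at h2
      have h4 := congrArg (fun x : ℕ => (x : ℂ)) h2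
      push_cast at h4
      rw [h1]
      linear_combination (-1 : ℂ) ^ r * c j * h4
    rw [Finset.sum_congr rfl hterm, ← Finset.sum_mul, altsum (k - j)]
    ring
  rw [Finset.sum_congr rfl inner]
  rw [Finset.sum_eq_single k]
  · simp
  · intro b hb hbk
    rw [Finset.mem_range] at hb
    rw [if_neg (by omega)]
    ring
  · intro h
    exact absurd (Finset.self_mem_range_succ k) h

theorem stmt_14 (α : ℂ) (c d : ℕ → ℂ)
    (hd : ∀ m, d m =
      ∑ k ∈ Finset.range (m + 1), (Nat.choose m k : ℂ) * (-1) ^ (m - k) * c k)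
    (n : ℕ) (hn : 1 ≤ n) :
    ∑ k ∈ Finset.range (n + 1),
        (Nat.choose n k : ℂ) * (-1) ^ k * genHarmonic α k * c k =
      (-1) ^ n * d n * genHarmonic α n -
        (∑ m ∈ Finset.range n, (-1) ^ m * d m / ((n - m : ℕ) : ℂ)) +
        ∑ m ∈ Finset.range n,
          (-1) ^ m * d m *
            ∑ t ∈ Finset.Icc (n - m) n,
              (Nat.choose t (n - m) : ℂ) * (1 - α) ^ (n - m) * α ^ (t - (n - m)) / (t : ℂ) := by
  -- Step 1: substitute c and swap summation order
  have step1 : ∑ k ∈ Finset.range (n + 1),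
        (Nat.choose n k : ℂ) * (-1) ^ k * genHarmonic α k * c k
      = ∑ m ∈ range (n + 1), ∑ k ∈ Ico m (n + 1),
          (n.choose k : ℂ) * (-1) ^ k * genHarmonic α k * ((k.choose m : ℂ) * d m) := by
    have h1 : ∀ k ∈ range (n + 1),
        (n.choose k : ℂ) * (-1) ^ k * genHarmonic α k * c k
          = ∑ m ∈ range (k + 1),
              (n.choose k : ℂ) * (-1) ^ k * genHarmonic α k * ((k.choose m : ℂ) * d m) := by
      intro k _
      rw [inversion c d hd k, Finset.mul_sum]
    rw [Finset.sum_congr rfl h1]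
    simp only [← Nat.Ico_zero_eq_range]
    rw [← Finset.sum_Ico_Ico_comm 0 (n + 1)
      (fun m k => (n.choose k : ℂ) * (-1) ^ k * genHarmonic α k * ((k.choose m : ℂ) * d m))]
  -- Step 2: inner sum in terms of W m
  have step2 : ∀ m ∈ range (n + 1),
      ∑ k ∈ Ico m (n + 1),
          (n.choose k : ℂ) * (-1) ^ k * genHarmonic α k * ((k.choose m : ℂ) * d m)
        = d m * ((-1) ^ m * ((n.choose m : ℂ) *
            ∑ j ∈ range (n - m + 1), ((n - m).choose j : ℂ) * (-1) ^ j * genHarmonic α (m + j))) := by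
    intro m hm
    rw [Finset.mem_range] at hm
    rw [Finset.sum_Ico_eq_sum_range
      (fun k => (n.choose k : ℂ) * (-1) ^ k * genHarmonic α k * ((k.choose m : ℂ) * d m)) m (n + 1)]
    have e1 : n + 1 - m = (n - m) + 1 := by omega
    rw [e1,
      Finset.mul_sum (range (n - m + 1))
        (fun j => ((n - m).choose j : ℂ) * (-1) ^ j * genHarmonic α (m + j)) ((n.choose m : ℂ)),
      Finset.mul_sum (range (n - m + 1))
        (fun j => (n.choose m : ℂ) * (((n - m).choose j : ℂ) * (-1) ^ j * genHarmonic α (m + j)))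
        ((-1 : ℂ) ^ m),
      Finset.mul_sum (range (n - m + 1))
        (fun j => (-1 : ℂ) ^ m * ((n.choose m : ℂ) * (((n - m).choose j : ℂ) * (-1) ^ j * genHarmonic α (m + j))))
        (d m)]
    refine Finset.sum_congr rfl fun j hj => ?_
    rw [Finset.mem_range] at hj
    have h2 := Nat.choose_mul (n := n) (show m ≤ m + j by omega)
    rw [show m + j - m = j by omega] at h2
    have h4 := congrArg (fun x : ℕ => (x : ℂ)) h2
    push_cast at h4
    linear_combination ((-1 : ℂ) ^ (m + j) * genHarmonic α (m + j) * d m) * h4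
  rw [step1, Finset.sum_congr rfl step2, Finset.sum_range_succ]
  -- top term m = n
  have htop : d n * ((-1) ^ n * ((n.choose n : ℂ) *
      ∑ j ∈ range (n - n + 1), ((n - n).choose j : ℂ) * (-1) ^ j * genHarmonic α (n + j)))
      = (-1) ^ n * d n * genHarmonic α n := by
    simp only [Nat.sub_self, Nat.choose_self, Nat.cast_one, Finset.sum_range_one,
      Nat.choose_zero_right, pow_zero, one_mul, Nat.add_zero, mul_one, zero_add]
    ring
  rw [htop]
  -- per m < n
  have hmain : ∀ m ∈ range n,
      d m * ((-1) ^ m * ((n.choose m : ℂ) *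
        ∑ j ∈ range (n - m + 1), ((n - m).choose j : ℂ) * (-1) ^ j * genHarmonic α (m + j)))
      = (-1) ^ m * d m *
          (∑ t ∈ Finset.Icc (n - m) n,
            (Nat.choose t (n - m) : ℂ) * (1 - α) ^ (n - m) * α ^ (t - (n - m)) / (t : ℂ))
        - (-1) ^ m * d m / ((n - m : ℕ) : ℂ) := by
    intro m hm
    rw [Finset.mem_range] at hm
    set N := n - m - 1 with hNdef
    have hnm : n - m = N + 1 := by omega
    have e2 : n - m + 1 = N + 2 := by omega
    rw [e2, hnm]
    -- rewrite binomial coefficient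
    have hch : (n.choose m : ℂ) = ((m + N + 1).choose (N + 1) : ℂ) := by
      have : (m + N + 1).choose (N + 1) = (m + N + 1).choose m := by
        rw [← Nat.choose_symm (show N + 1 ≤ m + N + 1 by omega)]
        congr 1
        omega
      rw [this, show m + N + 1 = n by omega]
    rw [hch, lemG α N m, lemK α N m]
    -- now handle the Icc sum on the RHS
    have hicc : ∑ t ∈ Finset.Icc (N + 1) n,
          (Nat.choose t (N + 1) : ℂ) * (1 - α) ^ (N + 1) * α ^ (t - (N + 1)) / (t : ℂ)
        = ∑ s ∈ range (m + 1),
            ((N + 1 + s).choose (N + 1) : ℂ) * (1 - α) ^ (N + 1) * α ^ s / ((N + 1 + s : ℕ) : ℂ) := by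
      rw [← Finset.Ico_add_one_right_eq_Icc, Finset.sum_Ico_eq_sum_range,
        show n + 1 - (N + 1) = m + 1 by omega]
      refine Finset.sum_congr rfl fun s hs => ?_
      rw [show N + 1 + s - (N + 1) = s by omega]
    rw [hicc]
    have hcast : ((N + 1 : ℕ) : ℂ) = (N : ℂ) + 1 := by push_cast; ring
    rw [hcast]
    ring
  rw [Finset.sum_congr rfl hmain, Finset.sum_sub_distrib]
  ring
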